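/- The infinite product ∏_{n=2}^∞ Erf(√(ln n)) equals zero, equivalently the series ∑_{n=2}^∞ (1 − Erf(√(ln n))) diverges. -/

import Mathlib

open MeasureTheory Real Filter

/-- The Gauss error function `Erf x = (2/√π) ∫ t in 0..x, e^{-t²}`. -/
noncomputable def Erf (x : ℝ) : ℝ :=
  (2 / Real.sqrt π) * ∫ t in (0 : ℝ)..x, Real.exp (-t ^ 2)

/-!
Writing `1 - Erf x = (2/√π) ∫_x^∞ e^{-t²}` and integrating only over `[x, x + 1/(x+1)]` gives
`1 - Erf x ≥ (2/√π) e^{-3} e^{-x²} / (x + 1)`. At `x = √(ln n)` we have `e^{-x²} = 1/n`, so along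
`n = 2^k` the condensed terms `2^k (1 - Erf √(ln 2^k))` are `≳ 1/√(k+1)`, and Cauchy condensation
gives divergence of `∑ (1 - Erf √(ln n))`. Since `0 ≤ Erf ≤ 1` and `Erf ≤ exp (-(1 - Erf))`, the
partial products are bounded by `exp` of minus the partial sums, hence tend to `0`.
-/

lemma integrable_exp_neg_sq : Integrable fun t : ℝ => exp (-t ^ 2) := by
  simpa using integrable_exp_neg_mul_sq one_pos

lemma one_sub_Erf (x : ℝ) : 1 - Erf x = 2 / √π * ∫ t in Set.Ioi x, exp (-t ^ 2) := by
  have hsplit := intervalIntegral.integral_Ioi_sub_Ioi'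
    (integrable_exp_neg_sq.integrableOn (s := Set.Ioi 0)) integrable_exp_neg_sq.integrableOn (b := x)
  have hhalf : ∫ t in Set.Ioi (0 : ℝ), exp (-t ^ 2) = √π / 2 := by
    simpa using integral_gaussian_Ioi 1
  have hπ : √π ≠ 0 := (sqrt_pos.mpr pi_pos).ne'
  rw [Erf, ← hsplit, hhalf]
  field_simp
  ring

lemma Erf_zero : Erf 0 = 0 := by simp [Erf]

lemma monotone_Erf : Monotone Erf := by
  intro x y hxy
  have hsub := intervalIntegral.integral_interval_sub_left
    (integrable_exp_neg_sq.intervalIntegrable (a := 0) (b := y))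
    (integrable_exp_neg_sq.intervalIntegrable (a := 0) (b := x))
  unfold Erf
  refine mul_le_mul_of_nonneg_left ?_ (by positivity)
  rw [← sub_nonneg, hsub]
  exact intervalIntegral.integral_nonneg hxy fun t _ => (exp_pos _).le

lemma Erf_nonneg {x : ℝ} (hx : 0 ≤ x) : 0 ≤ Erf x :=
  Erf_zero ▸ monotone_Erf hx

lemma Erf_le_one (x : ℝ) : Erf x ≤ 1 := by
  rw [← sub_nonneg, one_sub_Erf]
  exact mul_nonneg (by positivity) (setIntegral_nonneg measurableSet_Ioi fun t _ => (exp_pos _).le)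

-- On `[x, x + 1/(x+1)]` the integrand is at least `e^{-3} e^{-x²}`, since `(x + 1/(x+1))² ≤ x² + 3`.
lemma exp_neg_sq_div_le_integral_Ioi {x : ℝ} (hx : 0 ≤ x) :
    exp (-3) * exp (-x ^ 2) / (x + 1) ≤ ∫ t in Set.Ioi x, exp (-t ^ 2) := by
  set δ := (x + 1)⁻¹
  have hδ : 0 < δ := by positivity
  have hxδ : x * δ ≤ 1 := by
    rw [← div_eq_mul_inv, div_le_one (by positivity)]; linarith
  have hδ1 : δ ≤ 1 := inv_le_one_of_one_le₀ (by linarith)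
  have hpoint : ∀ t ∈ Set.Ioc x (x + δ), exp (-3) * exp (-x ^ 2) ≤ exp (-t ^ 2) := by
    rintro t ⟨hxt, htδ⟩
    rw [← exp_add, exp_le_exp]
    nlinarith
  calc exp (-3) * exp (-x ^ 2) / (x + 1)
      = ∫ _ in Set.Ioc x (x + δ), exp (-3) * exp (-x ^ 2) := by
        rw [setIntegral_const, volume_real_Ioc_of_le (by linarith), smul_eq_mul]
        ring
    _ ≤ ∫ t in Set.Ioc x (x + δ), exp (-t ^ 2) :=
        setIntegral_mono_on (integrableOn_const measure_Ioc_lt_top.ne)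
          integrable_exp_neg_sq.integrableOn measurableSet_Ioc hpoint
    _ ≤ ∫ t in Set.Ioi x, exp (-t ^ 2) :=
        setIntegral_mono_set integrable_exp_neg_sq.integrableOn
          (.of_forall fun t => (exp_pos _).le) (.of_forall Set.Ioc_subset_Ioi_self)

lemma not_summable_one_div_sqrt_succ : ¬ Summable fun k : ℕ => 1 / √((k : ℝ) + 1) := by
  have h : ¬ Summable fun k : ℕ => 1 / √(k : ℝ) := by
    simp_rw [sqrt_eq_rpow, summable_one_div_nat_rpow]
    norm_num
  simpa using (summable_nat_add_iff 1).not.mpr h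

lemma two_pow_mul_one_sub_Erf_sqrt_log_ge (k : ℕ) :
    exp (-3) / √π * (1 / √((k : ℝ) + 1)) ≤ 2 ^ k * (1 - Erf √(log (2 ^ k : ℕ))) := by
  set x := √(log (2 ^ k : ℕ))
  have hx2 : x ^ 2 = k * log 2 := by
    rw [sq_sqrt (log_natCast_nonneg _)]
    push_cast
    exact log_pow 2 k
  have hexp : 2 ^ k * exp (-x ^ 2) = 1 := by
    rw [hx2, ← log_pow, exp_neg, exp_log (by positivity)]
    field_simp
  have hx : x + 1 ≤ 2 * √((k : ℝ) + 1) := by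
    have hxk : x ≤ √((k : ℝ) + 1) := by
      rw [le_sqrt (sqrt_nonneg _) (by positivity), hx2]
      nlinarith [log_two_lt_d9, (k.cast_nonneg : (0 : ℝ) ≤ k)]
    have h1 : 1 ≤ √((k : ℝ) + 1) := one_le_sqrt.mpr (by linarith [k.cast_nonneg (α := ℝ)])
    linarith
  have hlow := exp_neg_sq_div_le_integral_Ioi (sqrt_nonneg _ : 0 ≤ x)
  rw [one_sub_Erf]
  calc exp (-3) / √π * (1 / √((k : ℝ) + 1))
      = 2 / √π * (exp (-3) * (2 ^ k * exp (-x ^ 2)) / (2 * √((k : ℝ) + 1))) := by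
        rw [hexp]; field_simp
    _ ≤ 2 / √π * (exp (-3) * (2 ^ k * exp (-x ^ 2)) / (x + 1)) := by gcongr
    _ = 2 ^ k * (2 / √π * (exp (-3) * exp (-x ^ 2) / (x + 1))) := by ring
    _ ≤ 2 ^ k * (2 / √π * ∫ t in Set.Ioi x, exp (-t ^ 2)) := by gcongr

lemma not_summable_one_sub_Erf_sqrt_log : ¬ Summable fun n : ℕ => 1 - Erf √(log n) := by
  have hanti : ∀ ⦃m n : ℕ⦄, 0 < m → m ≤ n → 1 - Erf √(log n) ≤ 1 - Erf √(log m) :=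
    fun m n hm hmn => sub_le_sub_left
      (monotone_Erf (sqrt_le_sqrt (log_le_log (by positivity) (by exact_mod_cast hmn)))) 1
  rw [← summable_condensed_iff_of_nonneg (fun n => sub_nonneg.mpr (Erf_le_one _)) hanti]
  intro hs
  refine not_summable_one_div_sqrt_succ ((summable_mul_left_iff (a := exp (-3) / √π)
    (by positivity)).mp ?_)
  exact hs.of_nonneg_of_le (fun k => by positivity) two_pow_mul_one_sub_Erf_sqrt_log_ge

lemma tendsto_prod_range_zero_of_not_summable_one_sub {a : ℕ → ℝ} (h0 : ∀ n, 0 ≤ a n)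
    (h1 : ∀ n, a n ≤ 1) (h : ¬ Summable fun n => 1 - a n) :
    Tendsto (fun N => ∏ n ∈ Finset.range N, a n) atTop (nhds 0) := by
  have hsum := (not_summable_iff_tendsto_nat_atTop_of_nonneg fun n => sub_nonneg.mpr (h1 n)).mp h
  have hbound : ∀ N, ∏ n ∈ Finset.range N, a n ≤ exp (-∑ n ∈ Finset.range N, (1 - a n)) := by
    intro N
    rw [← Finset.sum_neg_distrib, exp_sum]
    exact Finset.prod_le_prod (fun n _ => h0 n) fun n _ => by
      linarith [add_one_le_exp (-(1 - a n))]
  exact tendsto_of_tendsto_of_tendsto_of_le_of_le tendsto_const_nhds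
    (tendsto_exp_atBot.comp (tendsto_neg_atTop_atBot.comp hsum))
    (fun N => Finset.prod_nonneg fun n _ => h0 n) hbound

/-- The infinite product `∏_{n=2}^∞ Erf (√(ln n))` equals zero; equivalently
the series `∑_{n=2}^∞ (1 − Erf (√(ln n)))` diverges. -/
theorem erf_prod_eq_zero :
    Tendsto (fun N : ℕ => ∏ n ∈ Finset.Icc 2 N, Erf (Real.sqrt (Real.log n)))
        atTop (nhds 0) ∧
      ¬ Summable (fun n : ℕ => 1 - Erf (Real.sqrt (Real.log (n + 2)))) := by
  have hdiv : ¬ Summable (fun n : ℕ => 1 - Erf (Real.sqrt (Real.log (n + 2)))) := by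
    have := (summable_nat_add_iff 2).not.mpr not_summable_one_sub_Erf_sqrt_log
    simpa using this
  refine ⟨?_, hdiv⟩
  have hreindex : ∀ N : ℕ, ∏ n ∈ Finset.Icc 2 N, Erf √(log n)
      = ∏ i ∈ Finset.range (N - 1), Erf √(log ((i : ℝ) + 2)) := by
    intro N
    rw [← Finset.Ico_add_one_right_eq_Icc, Finset.prod_Ico_eq_prod_range,
      show N + 1 - 2 = N - 1 by omega]
    simp [add_comm]
  simp_rw [hreindex]
  exact (tendsto_prod_range_zero_of_not_summable_one_sub (fun _ => Erf_nonneg (sqrt_nonneg _))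
    (fun _ => Erf_le_one _) hdiv).comp (tendsto_sub_atTop_nat 1)
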